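/- arXiv:2502.04179 — 4 statements merged into one kernel-verified Lean document; each statement's English description precedes it below -/
import Mathlib

section
/- For real numbers c > 0 and d, let f(θ) = c²θ² + c(d−2)θ + (c−d) and g(θ) = cθ² + dθ + 1 over ℂ. Then f and g have a common root in ℂ if and only if d² − 4c = 0, i.e., if and only if g has a double root. -/
/-!
Since `f = c g - g'`, a common root of `f` and `g` is the same as a common root of `g` and `g'`,
i.e. a multiple root of `g`; for the quadratic `g` this means a root of multiplicity exactly two,
and it happens precisely when the discriminant `d² - 4c` vanishes.
-/

open Polynomial

theorem Polynomial.rootMultiplicity_eq_two_iff_of_natDegree_eq_two {R : Type*} [CommRing R]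
    [IsDomain R] {p : R[X]} (hp : p.natDegree = 2) (t : R) :
    p.rootMultiplicity t = 2 ↔ p.IsRoot t ∧ (derivative p).IsRoot t := by
  have hp0 : p ≠ 0 := by rintro rfl; simp at hp
  have hle : p.rootMultiplicity t ≤ 2 := by
    calc p.rootMultiplicity t = ((X - C t) ^ p.rootMultiplicity t).natDegree := by simp
      _ ≤ p.natDegree := natDegree_le_of_dvd (pow_rootMultiplicity_dvd p t) hp0
      _ = 2 := hp
  rw [← one_lt_rootMultiplicity_iff_isRoot hp0]
  omega

theorem exists_isRoot_quadratic_and_derivative_iff_discrim_eq_zero {K : Type*} [Field K]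
    [NeZero (2 : K)] {a b c : K} (ha : a ≠ 0) :
    (∃ x, (C a * X ^ 2 + C b * X + C c).IsRoot x ∧
      (derivative (C a * X ^ 2 + C b * X + C c)).IsRoot x) ↔ discrim a b c = 0 := by
  simp only [derivative_add, derivative_mul, derivative_C, derivative_X_pow_succ, derivative_X,
    IsRoot.def, eval_add, eval_mul, eval_C, eval_zero, eval_one, eval_pow, eval_X]
  constructor
  · rintro ⟨x, hq, hq'⟩
    rw [discrim]
    linear_combination (2 * a * x + b) * hq' - 4 * a * hq
  · intro hd
    refine ⟨-b / (2 * a), ?_, ?_⟩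
    · linear_combination (quadratic_eq_zero_iff_of_discrim_eq_zero ha hd (-b / (2 * a))).2 rfl
    · field_simp
      ring

theorem stmt1 (c d : ℝ) (hc : 0 < c)
    (f g : Polynomial ℂ)
    (hf : f = C ((c : ℂ)^2) * X^2 + C ((c : ℂ) * ((d : ℂ) - 2)) * X + C ((c : ℂ) - (d : ℂ)))
    (hg : g = C (c : ℂ) * X^2 + C (d : ℂ) * X + C 1) :
    ((∃ α : ℂ, f.IsRoot α ∧ g.IsRoot α) ↔ d^2 - 4*c = 0) ∧
    ((∃ α : ℂ, f.IsRoot α ∧ g.IsRoot α) ↔ ∃ α : ℂ, g.rootMultiplicity α = 2) := by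
  have hc0 : (c : ℂ) ≠ 0 := by exact_mod_cast hc.ne'
  have hfg : f = C (c : ℂ) * g - derivative g := by
    subst hf hg
    simp only [map_mul, map_sub, map_pow, C_ofNat, map_one, derivative_add, derivative_mul,
      derivative_C, derivative_X_pow, Nat.cast_ofNat, derivative_X, derivative_one]
    ring
  have common : (∃ α, f.IsRoot α ∧ g.IsRoot α) ↔ ∃ α, g.IsRoot α ∧ (derivative g).IsRoot α := by
    refine exists_congr fun α => ?_
    simp only [hfg, IsRoot.def, eval_sub, eval_mul, eval_C]
    constructor
    · rintro ⟨hfα, hgα⟩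
      exact ⟨hgα, by simpa [hgα] using hfα⟩
    · rintro ⟨hgα, hg'α⟩
      exact ⟨by simp [hgα, hg'α], hgα⟩
  have discriminant : (∃ α, g.IsRoot α ∧ (derivative g).IsRoot α) ↔ d ^ 2 - 4 * c = 0 := by
    rw [hg, exists_isRoot_quadratic_and_derivative_iff_discrim_eq_zero hc0, discrim, mul_one]
    norm_cast
  have double : (∃ α, g.rootMultiplicity α = 2) ↔ ∃ α, g.IsRoot α ∧ (derivative g).IsRoot α :=
    exists_congr (rootMultiplicity_eq_two_iff_of_natDegree_eq_two (hg ▸ natDegree_quadratic hc0))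
  exact ⟨common.trans discriminant, common.trans double.symm⟩
end

section
/- Let n ≥ 4 and let g₁,…,gₙ be monic quadratic polynomials over ℂ, pairwise distinct as root-multisets (no two gᵢ have the same pair of roots), such that every pair (gᵢ, gⱼ) with i ≠ j has a common root. Then there exists a unique α ∈ ℂ that is a root of every gᵢ. -/
/-!
Two distinct roots of a quadratic determine its root multiset, so the root sets of the `gᵢ` form
a family of sets with at most two points, pairwise meeting in exactly one point. Such a family is
either a star (all sets through one point) or a triangle `{a, b}, {a, c}, {b, c}`, and a triangle
admits no fourth member: a set of at most two points meeting all three sides would share two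
points with one of them.
-/

open Polynomial
open scoped Finset

namespace Finset

variable {α ι : Type*}

lemma eq_or_eq_of_card_le_two {s : Finset α} (hs : #s ≤ 2) {a b c : α} (hab : a ≠ b)
    (ha : a ∈ s) (hb : b ∈ s) (hc : c ∈ s) : c = a ∨ c = b := by
  by_contra! h
  exact hs.not_gt (two_lt_card_iff.2 ⟨a, b, c, ha, hb, hc, hab, h.1.symm, h.2.symm⟩)

variable [DecidableEq α]

lemma eq_of_mem_of_card_inter_le_one {s t : Finset α} (h : #(s ∩ t) ≤ 1) {a b : α}
    (has : a ∈ s) (hat : a ∈ t) (hbs : b ∈ s) (hbt : b ∈ t) : a = b :=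
  card_le_one.1 h a (mem_inter.2 ⟨has, hat⟩) b (mem_inter.2 ⟨hbs, hbt⟩)

section Family

variable {s : ι → Finset α} (hsmall : ∀ i, #(s i) ≤ 2)
  (hsparse : Pairwise fun i j ↦ #(s i ∩ s j) ≤ 1)
  (hmeet : Pairwise fun i j ↦ ¬Disjoint (s i) (s j))
include hsmall hsparse hmeet

lemma mem_of_mem_inter {i j k m : ι} (hij : i ≠ j) (hmi : m ≠ i) (hmj : m ≠ j) (hmk : m ≠ k)
    {a : α} (hai : a ∈ s i) (haj : a ∈ s j) : a ∈ s k := by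
  by_contra hak
  have hki : k ≠ i := by rintro rfl; exact hak hai
  have hkj : k ≠ j := by rintro rfl; exact hak haj
  obtain ⟨b, hbk, hbi⟩ := not_disjoint_iff.1 (hmeet hki)
  obtain ⟨c, hck, hcj⟩ := not_disjoint_iff.1 (hmeet hkj)
  have hba : b ≠ a := by rintro rfl; exact hak hbk
  have hca : c ≠ a := by rintro rfl; exact hak hck
  have hbc : b ≠ c := by
    rintro rfl
    exact hba (eq_of_mem_of_card_inter_le_one (hsparse hij) hbi hcj hai haj)
  by_cases ham : a ∈ s m
  · obtain ⟨f, hfm, hfk⟩ := not_disjoint_iff.1 (hmeet hmk)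
    have hfa : f ≠ a := by rintro rfl; exact hak hfk
    rcases eq_or_eq_of_card_le_two (hsmall k) hbc hbk hck hfk with rfl | rfl
    · exact hfa (eq_of_mem_of_card_inter_le_one (hsparse hmi) hfm hbi ham hai)
    · exact hfa (eq_of_mem_of_card_inter_le_one (hsparse hmj) hfm hcj ham haj)
  · obtain ⟨d, hdm, hdi⟩ := not_disjoint_iff.1 (hmeet hmi)
    obtain ⟨e, hem, hej⟩ := not_disjoint_iff.1 (hmeet hmj)
    have hdb : d = b := (eq_or_eq_of_card_le_two (hsmall i) hba.symm hai hbi hdi).resolve_left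
      (by rintro rfl; exact ham hdm)
    have hec : e = c := (eq_or_eq_of_card_le_two (hsmall j) hca.symm haj hcj hej).resolve_left
      (by rintro rfl; exact ham hem)
    subst hdb hec
    exact hbc (eq_of_mem_of_card_inter_le_one (hsparse hmk) hdm hbk hem hck)

theorem existsUnique_forall_mem_of_card_le_two [Fintype ι] (hι : 3 < Fintype.card ι) :
    ∃! a, ∀ i, a ∈ s i := by
  classical
  obtain ⟨i, j, hij⟩ := Fintype.exists_pair_of_one_lt_card (α := ι) (by omega)
  obtain ⟨a, hai, haj⟩ := not_disjoint_iff.1 (hmeet hij)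
  refine ⟨a, fun k ↦ ?_, fun b hb ↦
    eq_of_mem_of_card_inter_le_one (hsparse hij) (hb i) (hb j) hai haj⟩
  obtain ⟨m, -, hm⟩ := exists_mem_notMem_of_card_lt_card (s := {i, j, k}) (t := univ)
    ((card_le_three).trans_lt (by rwa [card_univ]))
  simp only [mem_insert, mem_singleton, not_or] at hm
  exact mem_of_mem_inter hsmall hsparse hmeet hij hm.1 hm.2.1 hm.2.2 hai haj

end Family

end Finset

namespace Polynomial

variable {R : Type*} [CommRing R] [IsDomain R]

lemma roots_eq_pair {p : R[X]} (hp0 : p ≠ 0) (hp : p.natDegree ≤ 2) {a b : R} (hab : a ≠ b)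
    (ha : p.IsRoot a) (hb : p.IsRoot b) : p.roots = {a, b} := by
  have hle : ({a, b} : Multiset R) ≤ p.roots := by
    rw [Multiset.le_iff_subset (by simpa using hab)]
    simpa [Multiset.insert_eq_cons, Multiset.cons_subset, mem_roots hp0] using ⟨ha, hb⟩
  exact (Multiset.eq_of_le_of_card_le hle ((card_roots' p).trans (by simpa using hp))).symm

variable [DecidableEq R]

lemma card_roots_toFinset_le_two {p : R[X]} (hp : p.natDegree ≤ 2) : #p.roots.toFinset ≤ 2 :=
  (Multiset.toFinset_card_le _).trans ((card_roots' p).trans hp)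

lemma card_inter_roots_toFinset_le_one {p q : R[X]} (hp0 : p ≠ 0) (hq0 : q ≠ 0)
    (hp : p.natDegree ≤ 2) (hq : q.natDegree ≤ 2) (hpq : p.roots ≠ q.roots) :
    #(p.roots.toFinset ∩ q.roots.toFinset) ≤ 1 := by
  refine Finset.card_le_one.2 fun a ha b hb ↦ by_contra fun hab ↦ hpq ?_
  simp only [Finset.mem_inter, Multiset.mem_toFinset, mem_roots hp0, mem_roots hq0] at ha hb
  rw [roots_eq_pair hp0 hp hab ha.1 hb.1, roots_eq_pair hq0 hq hab ha.2 hb.2]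

end Polynomial

theorem stmt8_general (n : ℕ) (hn : 4 ≤ n) (g : Fin n → Polynomial ℂ)
    (hdeg : ∀ i, (g i).degree = 2)
    (hdistinct : ∀ i j, i ≠ j → (g i).roots ≠ (g j).roots)
    (hcommon : ∀ i j, i ≠ j → ∃ α : ℂ, (g i).IsRoot α ∧ (g j).IsRoot α) :
    ∃! α : ℂ, ∀ i, (g i).IsRoot α := by
  have hg0 i : g i ≠ 0 := ne_zero_of_degree_gt (n := 1) (by rw [hdeg i]; decide)
  have hg2 i : (g i).natDegree ≤ 2 := natDegree_le_of_degree_le (hdeg i).le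
  have hmem i α : α ∈ (g i).roots.toFinset ↔ (g i).IsRoot α := by
    rw [Multiset.mem_toFinset, mem_roots (hg0 i)]
  simp_rw [← hmem]
  refine Finset.existsUnique_forall_mem_of_card_le_two (fun i ↦ card_roots_toFinset_le_two (hg2 i))
    (fun i j hij ↦ card_inter_roots_toFinset_le_one (hg0 i) (hg0 j) (hg2 i) (hg2 j)
      (hdistinct i j hij)) (fun i j hij ↦ ?_) (by rw [Fintype.card_fin]; omega)
  obtain ⟨α, hi, hj⟩ := hcommon i j hij
  exact Finset.not_disjoint_iff.2 ⟨α, (hmem i α).2 hi, (hmem j α).2 hj⟩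

theorem stmt8 (n : ℕ) (hn : 4 ≤ n) (g : Fin n → Polynomial ℂ)
    (hmonic : ∀ i, (g i).Monic) (hdeg : ∀ i, (g i).degree = 2)
    (hdistinct : ∀ i j, i ≠ j → (g i).roots ≠ (g j).roots)
    (hcommon : ∀ i j, i ≠ j → ∃ α : ℂ, (g i).IsRoot α ∧ (g j).IsRoot α) :
    ∃! α : ℂ, ∀ i, (g i).IsRoot α :=
  stmt8_general n hn g hdeg hdistinct hcommon
end

section
/- Let g₁,…,gₙ be quadratic polynomials over ℂ such that no two distinct gᵢ, gⱼ share a root, let gₖ have a double root α, let fₖ be a quadratic with fₖ(α) = 0 whose other root βₖ ≠ α, and let fᵢ (i ≠ k) be polynomials with fᵢ(α) ≠ 0. Then α is a root of f = Σᵢ (fᵢ · Πⱼ≠ᵢ gⱼ) with multiplicity exactly one. -/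
/-!
Split `F = f k * ∏_{j ≠ k} g j + ∑_{i ≠ k} f i * ∏_{j ≠ i} g j`. Every term of the second sum
contains the factor `g k = c (X - α)²`, so the sum vanishes to order at least two at `α`, while
the first term is `(X - α)` times a polynomial that does not vanish at `α`. A root of exact
multiplicity one survives the addition of something vanishing to order two.
-/

open Polynomial Finset

namespace Polynomial

variable {R : Type*} [CommRing R]

theorem rootMultiplicity_add_eq_left {p q : R[X]} {a : R} (hp : p ≠ 0)
    (hq : (X - C a) ^ (p.rootMultiplicity a + 1) ∣ q) :
    (p + q).rootMultiplicity a = p.rootMultiplicity a := by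
  have hpq : ¬(X - C a) ^ (p.rootMultiplicity a + 1) ∣ p + q := fun h =>
    pow_rootMultiplicity_not_dvd hp a (by simpa using dvd_sub h hq)
  have hpq0 : p + q ≠ 0 := fun h => hpq (h ▸ dvd_zero _)
  refine le_antisymm ((rootMultiplicity_le_iff hpq0 a _).mpr hpq) ?_
  rw [le_rootMultiplicity_iff hpq0]
  exact dvd_add (pow_rootMultiplicity_dvd p a) ((pow_dvd_pow _ (Nat.le_succ _)).trans hq)

theorem rootMultiplicity_mul_X_sub_C_of_eval_ne_zero {p : R[X]} {a : R} (hp : p.eval a ≠ 0) :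
    (p * (X - C a)).rootMultiplicity a = 1 := by
  have := rootMultiplicity_mul_X_sub_C_pow (p := p) (a := a) (n := 1) (by rintro rfl; exact hp eval_zero)
  rwa [pow_one, rootMultiplicity_eq_zero hp, zero_add] at this

end Polynomial

theorem stmt11_general (n : ℕ) (f g : Fin n → Polynomial ℂ)
    (k : Fin n) (α : ℂ) (c : ℂ)
    (hgk : g k = C c * (X - C α)^2)
    (hgα : ∀ i, i ≠ k → (g i).eval α ≠ 0)
    (c' βₖ : ℂ) (hc' : c' ≠ 0) (hβ : βₖ ≠ α)
    (hfk : f k = C c' * (X - C α) * (X - C βₖ))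
    (F : Polynomial ℂ)
    (hF : F = ∑ i, f i * ∏ j ∈ univ.erase i, g j) :
    F.rootMultiplicity α = 1 := by
  set P := ∏ j ∈ univ.erase k, g j
  have hsplit : F = f k * P + ∑ i ∈ univ.erase k, f i * ∏ j ∈ univ.erase i, g j := by
    rw [hF]
    exact (add_sum_erase _ _ (mem_univ k)).symm
  have hP : P.eval α ≠ 0 := by
    rw [eval_prod]
    exact prod_ne_zero_iff.mpr fun j hj => hgα j (ne_of_mem_erase hj)
  have hlead : (f k * P).rootMultiplicity α = 1 := by
    rw [show f k * P = C c' * (X - C βₖ) * P * (X - C α) by rw [hfk]; ring]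
    apply rootMultiplicity_mul_X_sub_C_of_eval_ne_zero
    simpa [sub_eq_zero, hc', hβ.symm] using hP
  have htail : (X - C α) ^ 2 ∣ ∑ i ∈ univ.erase k, f i * ∏ j ∈ univ.erase i, g j := by
    refine dvd_sum fun i hi => dvd_mul_of_dvd_right ?_ _
    calc (X - C α) ^ 2 ∣ g k := by rw [hgk]; exact dvd_mul_left _ _
      _ ∣ _ := dvd_prod_of_mem _ (mem_erase.mpr ⟨(ne_of_mem_erase hi).symm, mem_univ k⟩)
  have hne : f k * P ≠ 0 := fun h => by rw [h, rootMultiplicity_zero] at hlead; exact zero_ne_one hlead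
  rw [hsplit, rootMultiplicity_add_eq_left hne (by rwa [hlead]), hlead]

theorem stmt11 (n : ℕ) (hn : 1 ≤ n) (f g : Fin n → Polynomial ℂ)
    (hgdeg : ∀ i, (g i).degree = 2)
    (hdisj : ∀ i j, i ≠ j → ¬∃ β : ℂ, (g i).IsRoot β ∧ (g j).IsRoot β)
    (k : Fin n) (α : ℂ) (c : ℂ) (hc : c ≠ 0)
    (hgk : g k = C c * (X - C α)^2)
    (hgα : ∀ i, i ≠ k → (g i).eval α ≠ 0)
    (c' βₖ : ℂ) (hc' : c' ≠ 0) (hβ : βₖ ≠ α)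
    (hfk : f k = C c' * (X - C α) * (X - C βₖ))
    (hfα : ∀ i, i ≠ k → (f i).eval α ≠ 0)
    (F : Polynomial ℂ)
    (hF : F = ∑ i, f i * ∏ j ∈ univ.erase i, g j) :
    F.rootMultiplicity α = 1 :=
  stmt11_general n f g k α c hgk hgα c' βₖ hc' hβ hfk F hF
end

section
/- For data points (xᵢ,yᵢ) with cᵢ = xᵢyᵢ > 0, the polynomial f(θ) = Σᵢ₌₁ⁿ fᵢ(θ) Πⱼ≠ᵢ gⱼ(θ), with fᵢ(θ) = cᵢ²θ² + cᵢ(dᵢ−2)θ + (cᵢ−dᵢ) and gⱼ(θ) = cⱼθ² + dⱼθ + 1, has degree exactly 2n; in particular its leading coefficient is (Σᵢ cᵢ)·(Πⱼ cⱼ) > 0. -/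
/-!
Every summand `fᵢ · ∏_{j ≠ i} gⱼ` is a product of `n` quadratics, so it has degree at most `2n`
and its coefficient of `θ^{2n}` is the product of the leading coefficients, `cᵢ² · ∏_{j ≠ i} cⱼ =
cᵢ · ∏ⱼ cⱼ`. Summing over `i`, the coefficient of `θ^{2n}` in `f` is `(∑ᵢ cᵢ) · ∏ⱼ cⱼ`, which is
positive because all `cᵢ > 0` and `n ≥ 1`; hence `f` has degree exactly `2n`.
-/

open Polynomial Finset

namespace Polynomial

variable {R ι : Type*} [CommSemiring R] {s : Finset ι}

theorem natDegree_sum_eq_and_leadingCoeff_of_sum_coeff_ne_zero {f : ι → R[X]} {d : ℕ}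
    (hd : ∀ i ∈ s, (f i).natDegree ≤ d) (h : ∑ i ∈ s, (f i).coeff d ≠ 0) :
    (∑ i ∈ s, f i).natDegree = d ∧ (∑ i ∈ s, f i).leadingCoeff = ∑ i ∈ s, (f i).coeff d := by
  have hcoeff : (∑ i ∈ s, f i).coeff d = ∑ i ∈ s, (f i).coeff d := finsetSum_coeff s f d
  have hdeg : (∑ i ∈ s, f i).natDegree = d :=
    natDegree_eq_of_le_of_coeff_ne_zero (natDegree_sum_le_of_forall_le s f hd) (hcoeff ▸ h)
  exact ⟨hdeg, by rw [leadingCoeff, hdeg, hcoeff]⟩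

variable {g : ι → R[X]} {d : ℕ}

theorem natDegree_prod_le_card_mul (hg : ∀ j ∈ s, (g j).natDegree ≤ d) :
    (∏ j ∈ s, g j).natDegree ≤ #s * d :=
  (natDegree_prod_le s g).trans (by simpa using sum_le_card_nsmul s _ d hg)

variable [DecidableEq ι] {f : R[X]} {i : ι}

private lemma mul_card_eq_add_card_erase_mul (hi : i ∈ s) : d * #s = d + #(s.erase i) * d := by
  rw [← card_erase_add_one hi]; ring

theorem natDegree_mul_prod_erase_le (hi : i ∈ s) (hf : f.natDegree ≤ d)
    (hg : ∀ j ∈ s, (g j).natDegree ≤ d) : (f * ∏ j ∈ s.erase i, g j).natDegree ≤ d * #s :=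
  mul_card_eq_add_card_erase_mul hi ▸
    natDegree_mul_le_of_le hf (natDegree_prod_le_card_mul fun j hj => hg j (mem_of_mem_erase hj))

theorem coeff_mul_prod_erase (hi : i ∈ s) (hf : f.natDegree ≤ d)
    (hg : ∀ j ∈ s, (g j).natDegree ≤ d) :
    (f * ∏ j ∈ s.erase i, g j).coeff (d * #s) = f.coeff d * ∏ j ∈ s.erase i, (g j).coeff d := by
  have hg' : ∀ j ∈ s.erase i, (g j).natDegree ≤ d := fun j hj => hg j (mem_of_mem_erase hj)
  rw [mul_card_eq_add_card_erase_mul hi,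
    coeff_mul_add_eq_of_natDegree_le hf (natDegree_prod_le_card_mul hg'),
    coeff_prod_of_natDegree_le _ _ _ hg']

end Polynomial

theorem stmt18 (n : ℕ) (hn : 1 ≤ n) (c d : Fin n → ℝ) (hc : ∀ i, 0 < c i)
    (f g : Fin n → Polynomial ℂ)
    (hf : ∀ i, f i = C ((c i : ℂ)^2) * X^2 + C ((c i : ℂ) * ((d i : ℂ) - 2)) * X +
      C ((c i : ℂ) - (d i : ℂ)))
    (hg : ∀ i, g i = C (c i : ℂ) * X^2 + C (d i : ℂ) * X + C 1)
    (F : Polynomial ℂ)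
    (hF : F = ∑ i, f i * ∏ j ∈ univ.erase i, g j) :
    F.natDegree = 2*n ∧
      F.leadingCoeff = (((∑ i, c i) * ∏ j, c j : ℝ) : ℂ) ∧
      0 < (∑ i, c i) * ∏ j, c j := by
  subst hF
  have hfd (i) : (f i).natDegree ≤ 2 := hf i ▸ natDegree_quadratic_le
  have hgd (i) : (g i).natDegree ≤ 2 := hg i ▸ natDegree_quadratic_le
  have hf2 (i) : (f i).coeff 2 = (c i : ℂ) ^ 2 := by rw [hf i]; simp [-map_pow]
  have hg2 (i) : (g i).coeff 2 = (c i : ℂ) := by rw [hg i]; simp [-map_one]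
  have hpos : 0 < (∑ i, c i) * ∏ j, c j :=
    have : Nonempty (Fin n) := ⟨⟨0, hn⟩⟩
    mul_pos (sum_pos (fun i _ => hc i) univ_nonempty) (prod_pos fun i _ => hc i)
  have hcard : 2 * n = 2 * #(univ : Finset (Fin n)) := by rw [card_fin]
  have hcoeff : ∑ i, (f i * ∏ j ∈ univ.erase i, g j).coeff (2 * n)
      = (((∑ i, c i) * ∏ j, c j : ℝ) : ℂ) := by
    rw [hcard, sum_mul]
    push_cast
    refine sum_congr rfl fun i _ => ?_
    rw [coeff_mul_prod_erase (mem_univ i) (hfd i) fun j _ => hgd j, hf2,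
      prod_congr rfl fun j _ => hg2 j, sq, mul_assoc,
      mul_prod_erase univ (fun j => (c j : ℂ)) (mem_univ i)]
  obtain ⟨hdeg, hlc⟩ := natDegree_sum_eq_and_leadingCoeff_of_sum_coeff_ne_zero
    (fun i _ => hcard ▸ natDegree_mul_prod_erase_le (mem_univ i) (hfd i) fun j _ => hgd j)
    (hcoeff ▸ Complex.ofReal_ne_zero.2 hpos.ne')
  exact ⟨hdeg, hlc.trans hcoeff, hpos⟩
end
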